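/- arXiv:1506.08724 — 3 statements merged into one kernel-verified Lean document; each statement's English description precedes it below -/
import Mathlib

section
/- For every nondecreasing sequence μ ∈ ℝⁿ and every integer k with 1 ≤ k ≤ n, there exists a nondecreasing sequence ū ∈ ℝⁿ with at most k constant pieces (i.e., at most k−1 indices i with ū_i < ū_{i+1}) such that |ū_i − μ_i| ≤ (μ_n − μ_1)/(2k) for all i, and consequently (1/n)∑_{i=1}^n (ū_i − μ_i)² ≤ (μ_n − μ_1)²/(4k²). -/
/-!
Round every value to the midpoint of one of the `k` intervals of length `h = V / k` into which
`[μ 1, μ n]` is cut: `x ↦ μ 1 + h / 2 + h * j` with `j = min (k - 1) ⌊(x - μ 1) / h⌋₊`. This moves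
every value by at most `h / 2`, and the rounded sequence is monotone with its level index `j`, which
only takes the `k` values `0, …, k - 1`, so it jumps at most `k - 1` times.
-/

open Finset

lemma monotoneOn_Icc_of_le_succ {β : Type*} [Preorder β] {f : ℕ → β} {a b : ℕ}
    (hf : ∀ i ∈ Ico a b, f i ≤ f (i + 1)) : MonotoneOn f (Set.Icc a b) :=
  monotoneOn_of_le_succ Set.ordConnected_Icc fun i _ hi hi' =>
    hf i (mem_Ico.2 ⟨hi.1, Nat.succ_le_iff.1 hi'.2⟩)

lemma card_filter_lt_succ_add_le {m : ℕ → ℕ} {a b : ℕ} (hab : a ≤ b)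
    (hm : ∀ i ∈ Ico a b, m i ≤ m (i + 1)) :
    #{i ∈ Ico a b | m i < m (i + 1)} + m a ≤ m b := by
  induction b, hab using Nat.le_induction with
  | base => simp
  | succ b hab ih =>
    have hstep := hm b (mem_Ico.2 ⟨hab, b.lt_succ_self⟩)
    have ih := ih fun i hi => hm i (Ico_subset_Ico_right b.le_succ hi)
    rw [Nat.Ico_succ_right_eq_insert_Ico hab, filter_insert]
    split_ifs with hjump
    · grw [card_insert_le]; omega
    · omega

lemma mean_sq_le_sq_of_abs_le {ι : Type*} {s : Finset ι} {f : ι → ℝ} {c : ℝ}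
    (hf : ∀ i ∈ s, |f i| ≤ c) : (1 / (#s : ℝ)) * ∑ i ∈ s, f i ^ 2 ≤ c ^ 2 := by
  have hsum : ∑ i ∈ s, f i ^ 2 ≤ c ^ 2 * #s := by
    calc ∑ i ∈ s, f i ^ 2 ≤ ∑ _i ∈ s, c ^ 2 :=
          sum_le_sum fun i hi => sq_abs (f i) ▸ pow_le_pow_left₀ (abs_nonneg _) (hf i hi) 2
      _ = c ^ 2 * #s := by rw [sum_const, nsmul_eq_mul, mul_comm]
  rw [one_div_mul_eq_div]
  exact div_le_of_le_mul₀ (Nat.cast_nonneg _) (sq_nonneg c) hsum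

lemma abs_min_floor_add_half_sub_le {k : ℕ} (hk : 1 ≤ k) {t : ℝ} (ht₀ : 0 ≤ t) (htk : t ≤ k) :
    |(min (k - 1) ⌊t⌋₊ : ℕ) + 1 / 2 - t| ≤ 1 / 2 := by
  have hle : ((min (k - 1) ⌊t⌋₊ : ℕ) : ℝ) ≤ t :=
    (Nat.cast_le.2 (min_le_right _ _)).trans (Nat.floor_le ht₀)
  have hge : t ≤ (min (k - 1) ⌊t⌋₊ : ℕ) + 1 := by
    rcases min_choice (k - 1) ⌊t⌋₊ with h | h <;> rw [h]
    · rwa [Nat.cast_sub hk, Nat.cast_one, sub_add_cancel]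
    · exact (Nat.lt_floor_add_one t).le
  rw [abs_le]
  constructor <;> linarith

noncomputable def levelIndex (c h : ℝ) (k : ℕ) (x : ℝ) : ℕ :=
  min (k - 1) ⌊(x - c) / h⌋₊

noncomputable def roundToLevel (c h : ℝ) (k : ℕ) (x : ℝ) : ℝ :=
  c + h / 2 + h * levelIndex c h k x

section Rounding

variable {c h : ℝ} {k : ℕ}

lemma levelIndex_le (x : ℝ) : levelIndex c h k x ≤ k - 1 :=
  min_le_left _ _

lemma levelIndex_mono (hh : 0 ≤ h) : Monotone (levelIndex c h k) := fun _ _ hxy =>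
  min_le_min le_rfl (Nat.floor_le_floor (div_le_div_of_nonneg_right (by linarith) hh))

lemma roundToLevel_mono (hh : 0 ≤ h) : Monotone (roundToLevel c h k) := fun _ _ hxy => by
  unfold roundToLevel
  gcongr
  exact levelIndex_mono hh hxy

lemma levelIndex_lt_of_roundToLevel_lt {x y : ℝ} (hh : 0 ≤ h)
    (hxy : roundToLevel c h k x < roundToLevel c h k y) :
    levelIndex c h k x < levelIndex c h k y := by
  unfold roundToLevel at hxy
  exact_mod_cast lt_of_mul_lt_mul_left (lt_of_add_lt_add_left hxy) hh

lemma abs_roundToLevel_sub_le (hh : 0 ≤ h) (hk : 1 ≤ k) {x : ℝ} (hcx : c ≤ x)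
    (hxc : x ≤ c + k * h) : |roundToLevel c h k x - x| ≤ h / 2 := by
  set t := (x - c) / h
  have hx : x = c + h * t := by
    rcases hh.eq_or_lt with rfl | hpos
    · linarith
    · rw [mul_div_cancel₀ _ hpos.ne']; ring
  have htk : t ≤ k := div_le_of_le_mul₀ hh (Nat.cast_nonneg k) (by linarith)
  have hround : roundToLevel c h k x - x = h * ((levelIndex c h k x : ℝ) + 1 / 2 - t) := by
    rw [roundToLevel, hx]; ring
  calc |roundToLevel c h k x - x| = h * |(levelIndex c h k x : ℝ) + 1 / 2 - t| := by
        rw [hround, abs_mul, abs_of_nonneg hh]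
    _ ≤ h * (1 / 2) := by
        gcongr
        exact abs_min_floor_add_half_sub_le hk (div_nonneg (by linarith) hh) htk
    _ = h / 2 := by ring

end Rounding

theorem stmt_0_general (n k : ℕ) (hn : 1 ≤ n) (hk1 : 1 ≤ k)
    (μ : ℕ → ℝ) (hμ : ∀ i ∈ Finset.Ico 1 n, μ i ≤ μ (i + 1)) :
    ∃ u : ℕ → ℝ,
      (∀ i ∈ Finset.Ico 1 n, u i ≤ u (i + 1)) ∧
      ((Finset.Ico 1 n).filter (fun i => u i < u (i + 1))).card ≤ k - 1 ∧
      (∀ i ∈ Finset.Icc 1 n, |u i - μ i| ≤ (μ n - μ 1) / (2 * k)) ∧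
      (1 / (n : ℝ)) * ∑ i ∈ Finset.Icc 1 n, (u i - μ i) ^ 2
        ≤ (μ n - μ 1) ^ 2 / (4 * (k : ℝ) ^ 2) := by
  have hμ' := monotoneOn_Icc_of_le_succ hμ
  have hrange : ∀ i ∈ Icc 1 n, μ 1 ≤ μ i ∧ μ i ≤ μ n := fun i hi =>
    have hi := mem_Icc.1 hi
    ⟨hμ' ⟨le_rfl, hn⟩ hi hi.1, hμ' hi ⟨hn, le_rfl⟩ hi.2⟩
  set h := (μ n - μ 1) / k
  have hh : 0 ≤ h := div_nonneg (by linarith [hrange n (right_mem_Icc.2 hn)]) k.cast_nonneg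
  have htop : μ 1 + k * h = μ n := by
    rw [mul_div_cancel₀ _ (by positivity)]; ring
  have hbound : ∀ i ∈ Icc 1 n, |roundToLevel (μ 1) h k (μ i) - μ i| ≤ (μ n - μ 1) / (2 * k) :=
    fun i hi => by
      rw [mul_comm, ← div_div]
      exact abs_roundToLevel_sub_le hh hk1 (hrange i hi).1 (htop ▸ (hrange i hi).2)
  refine ⟨fun i => roundToLevel (μ 1) h k (μ i), fun i hi => roundToLevel_mono hh (hμ i hi),
    ?_, hbound, ?_⟩
  · have hjumps := card_filter_lt_succ_add_le (m := fun i => levelIndex (μ 1) h k (μ i)) hn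
      fun i hi => levelIndex_mono hh (hμ i hi)
    calc #{i ∈ Ico 1 n | roundToLevel (μ 1) h k (μ i) < roundToLevel (μ 1) h k (μ (i + 1))}
        ≤ #{i ∈ Ico 1 n | levelIndex (μ 1) h k (μ i) < levelIndex (μ 1) h k (μ (i + 1))} :=
          card_le_card <| monotone_filter_right _ fun _ _ => levelIndex_lt_of_roundToLevel_lt hh
      _ ≤ k - 1 := by have := levelIndex_le (c := μ 1) (h := h) (k := k) (μ n); omega
  · calc (1 / (n : ℝ)) * ∑ i ∈ Icc 1 n, (roundToLevel (μ 1) h k (μ i) - μ i) ^ 2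
        ≤ ((μ n - μ 1) / (2 * k)) ^ 2 := by
          simpa only [Nat.card_Icc, add_tsub_cancel_right] using mean_sq_le_sq_of_abs_le hbound
      _ = (μ n - μ 1) ^ 2 / (4 * (k : ℝ) ^ 2) := by ring

/-- Piecewise-constant approximation of a nondecreasing sequence
(indices 1,…,n): there is a nondecreasing sequence with at most `k`
constant pieces approximating `μ` within `(μ n - μ 1)/(2k)` in sup norm,
hence within `(μ n - μ 1)²/(4k²)` in scaled squared norm. -/
theorem stmt_0 (n k : ℕ) (hn : 1 ≤ n) (hk1 : 1 ≤ k) (hkn : k ≤ n)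
    (μ : ℕ → ℝ) (hμ : ∀ i ∈ Finset.Ico 1 n, μ i ≤ μ (i + 1)) :
    ∃ u : ℕ → ℝ,
      (∀ i ∈ Finset.Ico 1 n, u i ≤ u (i + 1)) ∧
      ((Finset.Ico 1 n).filter (fun i => u i < u (i + 1))).card ≤ k - 1 ∧
      (∀ i ∈ Finset.Icc 1 n, |u i - μ i| ≤ (μ n - μ 1) / (2 * k)) ∧
      (1 / (n : ℝ)) * ∑ i ∈ Finset.Icc 1 n, (u i - μ i) ^ 2
        ≤ (μ n - μ 1) ^ 2 / (4 * (k : ℝ) ^ 2) :=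
  stmt_0_general n k hn hk1 μ hμ
end

section
/- For n ≥ 2 and any subset J ⊆ {1,…,n−1}, with π_J = exp(−|J|)/(H · C(n−1,|J|)) and H = ∑_{i=0}^{n-1} exp(−i), the bound log(1/π_J) ≤ 2(|J|+1)·log(e·n/(|J|+1)) + 1/2 holds. -/
/-!
Write `k = |J|`, so that `log (1/π_J) = log H + log C(n-1,k) + k`. The geometric series gives
`H ≤ 1/(1 - e⁻¹) ≤ e^{1/2}`. Next `C(n-1,k) ≤ C(n,k+1) ≤ n^{k+1}/(k+1)! ≤ (e n/(k+1))^{k+1}`,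
using `r^r/r! ≤ e^r`. Finally `k+1 ≤ n` makes `log (e n/(k+1)) ≥ 1`, so `k` is absorbed by a
second copy of `(k+1) log (e n/(k+1))`.
-/

open Real Finset
open scoped Nat

theorem choose_le_exp_mul_div_pow (n k : ℕ) : (n.choose k : ℝ) ≤ (exp 1 * n / k) ^ k := by
  rcases k.eq_zero_or_pos with rfl | hk
  · simp
  have hk' : (k : ℝ) ≠ 0 := by exact_mod_cast hk.ne'
  calc (n.choose k : ℝ) ≤ (n : ℝ) ^ k / k ! := Nat.choose_le_pow_div k n
    _ = (n / k : ℝ) ^ k * ((k : ℝ) ^ k / k !) := by rw [div_pow]; field_simp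
    _ ≤ (n / k : ℝ) ^ k * exp k := by gcongr; exact pow_div_factorial_le_exp _ k.cast_nonneg k
    _ = (exp 1 * n / k) ^ k := by rw [← exp_one_pow]; ring

-- With `s = exp (1/2)` this is `s² - s - 1 ≥ 0`, i.e. `s` exceeds the golden ratio,
-- which holds since `s² = e > 2.62`.
theorem one_div_one_sub_exp_neg_one_le : 1 / (1 - exp (-1)) ≤ exp (1 / 2) := by
  set s := exp (1 / 2)
  have hs : 0 < s := exp_pos _
  have hs2 : s ^ 2 = exp 1 := by rw [← exp_nat_mul]; norm_num
  have he : exp (-1) = 1 / s ^ 2 := by rw [hs2, exp_neg, one_div]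
  have he_lo := exp_one_gt_d9
  have he_hi := exp_one_lt_d9
  rw [he, show 1 - 1 / s ^ 2 = (s ^ 2 - 1) / s ^ 2 by field_simp, one_div_div,
    div_le_iff₀ (by nlinarith)]
  nlinarith

theorem sum_range_exp_neg_le (n : ℕ) : ∑ i ∈ range n, exp (-(i : ℝ)) ≤ exp (1 / 2) := by
  have hgeom : ∀ i : ℕ, exp (-(i : ℝ)) = exp (-1) ^ i := fun i => by
    rw [← exp_nat_mul]; ring_nf
  simp only [hgeom, range_eq_Ico]
  calc ∑ i ∈ Ico 0 n, exp (-1) ^ i ≤ exp (-1) ^ 0 / (1 - exp (-1)) :=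
        geom_sum_Ico_le_of_lt_one (exp_pos _).le (exp_lt_one_iff.mpr neg_one_lt_zero)
    _ ≤ exp (1 / 2) := by rw [pow_zero]; exact one_div_one_sub_exp_neg_one_le

theorem one_le_log_exp_one_mul_div {a b : ℝ} (ha : 0 < a) (hab : a ≤ b) :
    1 ≤ log (exp 1 * b / a) := by
  rw [le_log_iff_exp_le (div_pos (mul_pos (exp_pos 1) (ha.trans_le hab)) ha), le_div_iff₀ ha]
  nlinarith [exp_pos 1]

/-- Bound on the log inverse prior weight:
`log(1/π_J) ≤ 2(|J|+1) log(e n/(|J|+1)) + 1/2` where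
`π_J = exp(-|J|)/(H · C(n-1,|J|))`, `H = ∑_{i=0}^{n-1} exp(-i)`. -/
theorem stmt_2 (n : ℕ) (hn : 2 ≤ n) (J : Finset ℕ) (hJ : J ⊆ Finset.Icc 1 (n - 1)) :
    Real.log (1 /
        (Real.exp (-(J.card : ℝ)) /
          ((∑ i ∈ Finset.range n, Real.exp (-(i : ℝ))) *
            (Nat.choose (n - 1) J.card : ℝ))))
      ≤ 2 * ((J.card : ℝ) + 1) * Real.log (Real.exp 1 * n / ((J.card : ℝ) + 1))
        + 1 / 2 := by
  set k := J.card
  set H := ∑ i ∈ range n, exp (-(i : ℝ))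
  set L := log (exp 1 * n / ((k : ℝ) + 1))
  obtain ⟨m, rfl⟩ : ∃ m, n = m + 1 := ⟨n - 1, by omega⟩
  have hkm : k ≤ m := by simpa using card_le_card hJ
  have hH : 0 < H := sum_pos (fun i _ => exp_pos _) ⟨0, by simp⟩
  have hC : 0 < (m.choose k : ℝ) := by exact_mod_cast Nat.choose_pos hkm
  have hL : 1 ≤ L := one_le_log_exp_one_mul_div (by positivity) (by push_cast; gcongr)
  have hlogH : log H ≤ 1 / 2 := (log_le_log hH (sum_range_exp_neg_le _)).trans_eq (log_exp _)
  have hlogC : log (m.choose k) ≤ (k + 1) * L := by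
    calc log (m.choose k) ≤ log ((m + 1).choose (k + 1) : ℝ) :=
          log_le_log hC (by rw [Nat.choose_succ_succ']; push_cast; linarith [hC])
      _ ≤ log ((exp 1 * (m + 1 : ℕ) / (k + 1 : ℕ)) ^ (k + 1)) :=
          log_le_log (by exact_mod_cast Nat.choose_pos (Nat.succ_le_succ hkm))
            (choose_le_exp_mul_div_pow _ _)
      _ = (k + 1) * L := by rw [log_pow]; simp only [L]; push_cast; ring
  rw [Nat.add_sub_cancel, one_div_div, log_div (by positivity) (exp_pos _).ne',
    log_mul hH.ne' hC.ne', log_exp]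
  nlinarith [(Nat.cast_nonneg k : (0 : ℝ) ≤ k)]
end

section
/- Let n ≥ 3, q ≥ 2 an integer dividing n, m = n/q, γ > 0. Define α_0 = 0, β_0 = 0, and recursively β_j = β_{j−1} + γ + m·α_{j−1}, α_j = 2γ + α_{j−1}. For ω ∈ {0,1}^q define u^ω ∈ ℝⁿ by u^ω_{jm+i} = ω_{j+1}·γ + α_j·(i−1) + β_j for j = 0,…,q−1 and i = 1,…,m. Then u^ω is convex, i.e., 2u^ω_i ≤ u^ω_{i−1} + u^ω_{i+1} for all i = 2,…,n−1. -/
/-!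
Write `d k = u (k + 1) - u k`. Inside block `j` the sequence is affine with slope `α j`, while
the jump from the last entry of block `j` to the first of block `j + 1` is
`(ω (j + 2) - ω (j + 1) + 1) γ + α j`, which lies between `α j` and `α j + 2γ = α (j + 1)`.
Hence `α ((k - 1) / m) ≤ d k ≤ α (k / m)`, and the two bounds chain into `d (i - 1) ≤ d i`.
-/

section BlockSequence

variable {m q : ℕ} {γ : ℝ} {α β ω u : ℕ → ℝ}

theorem blockSequence_increment_of_lt
    (hu : ∀ j < q, ∀ i ∈ Finset.Icc 1 m,
      u (j * m + i) = ω (j + 1) * γ + α j * ((i : ℝ) - 1) + β j)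
    {j r : ℕ} (hj : j < q) (hr : 1 ≤ r) (hrm : r < m) :
    u (j * m + r + 1) - u (j * m + r) = α j := by
  have hnext := hu j hj (r + 1) (Finset.mem_Icc.mpr ⟨by omega, hrm⟩)
  rw [← add_assoc] at hnext
  rw [hnext, hu j hj r (Finset.mem_Icc.mpr ⟨hr, hrm.le⟩)]
  push_cast
  ring

theorem blockSequence_increment_at_boundary
    (hu : ∀ j < q, ∀ i ∈ Finset.Icc 1 m,
      u (j * m + i) = ω (j + 1) * γ + α j * ((i : ℝ) - 1) + β j)
    (hβrec : ∀ j : ℕ, β (j + 1) = β j + γ + (m : ℝ) * α j)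
    {j : ℕ} (hj : j + 1 < q) (hm : 0 < m) :
    u (j * m + m + 1) - u (j * m + m) = (ω (j + 2) - ω (j + 1) + 1) * γ + α j := by
  have hnext := hu (j + 1) hj 1 (Finset.mem_Icc.mpr ⟨le_rfl, hm⟩)
  rw [add_mul, one_mul] at hnext
  rw [hnext, hu j (by omega) m (Finset.mem_Icc.mpr ⟨hm, le_rfl⟩), hβrec j]
  push_cast
  ring

theorem blockSequence_increment_bounds
    (hu : ∀ j < q, ∀ i ∈ Finset.Icc 1 m,
      u (j * m + i) = ω (j + 1) * γ + α j * ((i : ℝ) - 1) + β j)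
    (hβrec : ∀ j : ℕ, β (j + 1) = β j + γ + (m : ℝ) * α j)
    (hαrec : ∀ j : ℕ, α (j + 1) = 2 * γ + α j)
    (hω : ∀ j ∈ Finset.Icc 1 q, ω j = 0 ∨ ω j = 1) (hγ : 0 ≤ γ)
    {k : ℕ} (hk : 1 ≤ k) (hkn : k < q * m) :
    α ((k - 1) / m) ≤ u (k + 1) - u k ∧ u (k + 1) - u k ≤ α (k / m) := by
  have hm : 0 < m := Nat.pos_of_ne_zero (by rintro rfl; simp at hkn)
  obtain ⟨j, r, hr, hrm, rfl⟩ : ∃ j r, 1 ≤ r ∧ r ≤ m ∧ k = j * m + r :=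
    ⟨(k - 1) / m, (k - 1) % m + 1, by omega, Nat.mod_lt _ hm,
      by have := Nat.div_add_mod' (k - 1) m; omega⟩
  have hj : j < q := by
    by_contra! h
    nlinarith [Nat.mul_le_mul_right m h]
  have hblock : (j * m + r - 1) / m = j := by
    rw [show j * m + r - 1 = (r - 1) + m * j by rw [mul_comm]; omega,
      Nat.add_mul_div_left _ _ hm, Nat.div_eq_of_lt (by omega), zero_add]
  rw [hblock]
  rcases hrm.lt_or_eq with hrm | rfl
  · have hdiv : (j * m + r) / m = j := by
      rw [Nat.add_comm, Nat.add_mul_div_right _ _ hm, Nat.div_eq_of_lt hrm, zero_add]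
    rw [hdiv, blockSequence_increment_of_lt hu hj hr hrm]
    exact ⟨le_rfl, le_rfl⟩
  · have hj1 : j + 1 < q := by
      by_contra! h
      nlinarith [Nat.mul_le_mul_right r h]
    have hdiv : (j * r + r) / r = j + 1 := by
      rw [show j * r + r = (j + 1) * r by ring, Nat.mul_div_cancel _ hm]
    rw [hdiv, blockSequence_increment_at_boundary hu hβrec hj1 hm, hαrec j]
    have hω₁ := hω (j + 1) (Finset.mem_Icc.mpr ⟨by omega, by omega⟩)
    have hω₂ := hω (j + 2) (Finset.mem_Icc.mpr ⟨by omega, by omega⟩)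
    constructor <;> rcases hω₁ with h₁ | h₁ <;> rcases hω₂ with h₂ | h₂ <;>
      simp only [h₁, h₂] <;> linarith

end BlockSequence

theorem stmt_12_general (n q : ℕ) (hdvd : q ∣ n)
    (m : ℕ) (hm : m = n / q) (γ : ℝ) (hγ : 0 < γ)
    (α β : ℕ → ℝ)
    (hαrec : ∀ j : ℕ, α (j + 1) = 2 * γ + α j)
    (hβrec : ∀ j : ℕ, β (j + 1) = β j + γ + (m : ℝ) * α j)
    (ω : ℕ → ℝ) (hω : ∀ j ∈ Finset.Icc 1 q, ω j = 0 ∨ ω j = 1)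
    (u : ℕ → ℝ)
    (hu : ∀ j < q, ∀ i ∈ Finset.Icc 1 m,
      u (j * m + i) = ω (j + 1) * γ + α j * ((i : ℝ) - 1) + β j) :
    ∀ i ∈ Finset.Icc 2 (n - 1), 2 * u i ≤ u (i - 1) + u (i + 1) := by
  intro i hi
  obtain ⟨hi2, hin⟩ := Finset.mem_Icc.mp hi
  have hn : n = q * m := by rw [hm, Nat.mul_div_cancel' hdvd]
  have hleft := (blockSequence_increment_bounds hu hβrec hαrec hω hγ.le (k := i - 1)
    (by omega) (by omega)).2
  have hright := (blockSequence_increment_bounds hu hβrec hαrec hω hγ.le (k := i)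
    (by omega) (by omega)).1
  rw [Nat.sub_add_cancel (by omega : 1 ≤ i)] at hleft
  linarith

/-- The hypotheses `u^ω` of the convex minimax lower bound are convex
sequences: with `q ∣ n`, `m = n/q`, `α_0 = β_0 = 0`,
`α_j = 2γ + α_{j-1}`, `β_j = β_{j-1} + γ + m α_{j-1}` and
`u_{jm+i} = ω_{j+1} γ + α_j (i-1) + β_j`, one has
`2 u_i ≤ u_{i-1} + u_{i+1}` for `2 ≤ i ≤ n-1`. -/
theorem stmt_12 (n q : ℕ) (hn : 3 ≤ n) (hq : 2 ≤ q) (hdvd : q ∣ n)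
    (m : ℕ) (hm : m = n / q) (γ : ℝ) (hγ : 0 < γ)
    (α β : ℕ → ℝ) (hα0 : α 0 = 0) (hβ0 : β 0 = 0)
    (hαrec : ∀ j : ℕ, α (j + 1) = 2 * γ + α j)
    (hβrec : ∀ j : ℕ, β (j + 1) = β j + γ + (m : ℝ) * α j)
    (ω : ℕ → ℝ) (hω : ∀ j ∈ Finset.Icc 1 q, ω j = 0 ∨ ω j = 1)
    (u : ℕ → ℝ)
    (hu : ∀ j < q, ∀ i ∈ Finset.Icc 1 m,
      u (j * m + i) = ω (j + 1) * γ + α j * ((i : ℝ) - 1) + β j) :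
    ∀ i ∈ Finset.Icc 2 (n - 1), 2 * u i ≤ u (i - 1) + u (i + 1) :=
  stmt_12_general n q hdvd m hm γ hγ α β hαrec hβrec ω hω u hu
end
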